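/- (Main computation, Theorem 3 of the paper) Let Ξ = x_1 * x_2 * ··· * x_n (BCH product) and let -Ξ^{-1} denote the ⋄-inverse of -Ξ (with unit x_0 = -\sum_k x_k). Then -Ξ^{-1} + x_0 s(Ξ) x_0 = x_0 - \sum_{k>l} x_k x_l + \sum_{k=1}^n s(x_k) x_k^2 = -\sum_{k>l} x_k x_l + \sum_{k=1}^n x_k^2/(e^{-x_k}-1). -/

import Mathlib

/-- Words in the generators `x_1, …, x_n` (indexed by `Fin n`). -/
abbrev Word (n : ℕ) := List (Fin n)

/-- The completed tensor algebra `T = ∏ₘ H^{⊗m}` on the basis `x_1, …, x_n` of `H`,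
modeled as the space of ℚ-valued coefficient functions on words in the generators. -/
abbrev T (n : ℕ) : Type := Word n → ℚ

/-- The generator `x_k` as an element of `T n`. -/
def xgen {n : ℕ} (k : Fin n) : T n := fun w => if w = [k] then 1 else 0

/-- `x₀ = -∑ₖ xₖ`. -/
def x0 (n : ℕ) : T n := -∑ k : Fin n, xgen k

/-- The operation `⋄` on `T_{≥1}`, determined on monomials by
`(x_{i_1}⋯x_{i_{l-1}}x_{i_l}) ⋄ (x_{j_1}x_{j_2}⋯x_{j_m})
  = -δ_{i_l j_1} x_{i_1}⋯x_{i_{l-1}} x_{j_1}x_{j_2}⋯x_{j_m}`,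
extended bilinearly and continuously. -/
def dia {n : ℕ} (f g : T n) : T n :=
  fun w => -∑ i ∈ Finset.range w.length, f (w.take (i + 1)) * g (w.drop i)

/-- `f ∈ T_{≥p}`: all components of degree `< p` vanish. -/
def degGE {n : ℕ} (p : ℕ) (f : T n) : Prop := ∀ w : Word n, w.length < p → f w = 0

/-- The unit `1 ∈ T n` for the tensor product. -/
def oneT {n : ℕ} : T n := fun w => if w = [] then 1 else 0

/-- The (completed) tensor product on `T n`: concatenation product. -/
def mulT {n : ℕ} (f g : T n) : T n :=
  fun w => ∑ i ∈ Finset.range (w.length + 1), f (w.take i) * g (w.drop i)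

/-- Powers with respect to the tensor product. -/
def powT {n : ℕ} (f : T n) : ℕ → T n
  | 0 => oneT
  | m + 1 => mulT f (powT f m)

/-- Ordered product of a list of elements of `T n`. -/
def prodT {n : ℕ} : List (T n) → T n
  | [] => oneT
  | a :: l => mulT a (prodT l)

/-- Substitution of an element `a ∈ T_{≥1}` into a formal power series `F ∈ ℚ[[z]]`:
`F(a) = ∑ₘ (coeff m F) aᵐ`, a finite sum in each degree. -/
noncomputable def substT {n : ℕ} (F : PowerSeries ℚ) (a : T n) : T n :=
  fun w => ∑ m ∈ Finset.range (w.length + 1), PowerSeries.coeff m F * powT a m w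

/-- The exponential `e^a` for `a ∈ T_{≥1}`. -/
noncomputable def expT {n : ℕ} (a : T n) : T n := substT (PowerSeries.exp ℚ) a

/-- The power series `log(1+z) = ∑_{m≥1} (-1)^{m+1} zᵐ/m`. -/
def logSeries : PowerSeries ℚ :=
  PowerSeries.mk fun m => if m = 0 then 0 else (-1 : ℚ) ^ (m + 1) / (m : ℚ)

/-- The logarithm `log a` for `a ∈ 1 + T_{≥1}`. -/
noncomputable def logT {n : ℕ} (a : T n) : T n := substT logSeries (a - oneT)

/-- The Baker–Campbell–Hausdorff product `Ξ = x₁ * x₂ * ⋯ * xₙ = log(e^{x₁}e^{x₂}⋯e^{xₙ})`. -/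
noncomputable def Xi (n : ℕ) : T n := logT (prodT ((List.finRange n).map fun k => expT (xgen k)))

/-- The continuous algebra automorphism `Q` of `T n` with `Q(x_k) = -x_{n-k+1}`
(reversing and negating the basis). -/
def Qauto {n : ℕ} (f : T n) : T n := fun w => (-1 : ℚ) ^ w.length * f (w.map Fin.rev)

/-- `s(z) = 1/(e^{-z}-1) + 1/z` is characterized in `ℚ[[z]]` by the equation
`s(z) · (z·(e^{-z}-1)) = z + (e^{-z}-1)`. -/
def sSpec (s : PowerSeries ℚ) : Prop :=
  s * (PowerSeries.X * (PowerSeries.rescale (-1) (PowerSeries.exp ℚ) - 1)) =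
    PowerSeries.X + (PowerSeries.rescale (-1) (PowerSeries.exp ℚ) - 1)

/-- `g(z) = z/(e^{-z}-1)` is characterized in `ℚ[[z]]` by `g(z)·(e^{-z}-1) = z`. -/
def gSpec (g : PowerSeries ℚ) : Prop :=
  g * (PowerSeries.rescale (-1) (PowerSeries.exp ℚ) - 1) = PowerSeries.X

/-!
Write `P j = e^{x_j} ⋯ e^{x_{n-1}}`, so that `e^Ξ = P 0`, and `H = h(Ξ)` with
`h(z) = (e^z - 1)/z`, which is invertible. The left derivative `∂ₖ` (strip a leading
`x_k`) obeys the chain rule `∂ₖ e^Ξ = ∂ₖΞ · H`, while `∂ₖ (P 0) = h(x_k) · P (k+1)`; as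
`x_l ⋄ f = -x_l ∂_l f`, this gives `(x_l ⋄ (-Ξ)) H = P l - P (l+1)`. Since moreover
`(F g) ⋄ f = F (g ⋄ f)`, each term of
`W = x₀ - ∑_{k>l} x_k x_l + ∑ₖ s(x_k) x_k² - x₀ s(Ξ) x₀`
contributes to `(W ⋄ (-Ξ)) H` a telescoping combination of the `P j`, and the total is
`x₀ H`. Cancelling `H` gives `W ⋄ (-Ξ) = x₀`; as `x₀` is the unit of `⋄` on `T_{≥1}`, the
left inverse `W` of `-Ξ` equals its right inverse `V`. The second identity is
`s(z) z² = z g(z) + z`.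
-/

open Finset PowerSeries

lemma sum_range_sum_range_succ_comm {M : Type*} [AddCommMonoid M] (N : ℕ) (F : ℕ → ℕ → M) :
    ∑ i ∈ range N, ∑ j ∈ range (i + 1), F i j
      = ∑ j ∈ range N, ∑ d ∈ range (N - j), F (j + d) j := by
  have h := sum_Ico_Ico_comm 0 N (fun i j => F j i)
  simp only [Nat.Ico_zero_eq_range] at h
  rw [← h]
  exact sum_congr rfl fun j _ => by rw [sum_Ico_eq_sum_range]

section Concatenation

variable {n : ℕ}

lemma oneT_apply (w : Word n) : (oneT : T n) w = if w = [] then 1 else 0 := rfl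

lemma xgen_apply_nil (k : Fin n) : xgen k [] = 0 := by simp [xgen]

lemma mulT_apply_nil (f g : T n) : mulT f g [] = f [] * g [] := by
  simp [mulT]

lemma mulT_one (f : T n) : mulT f oneT = f := by
  funext w
  rw [mulT, sum_eq_single_of_mem w.length (self_mem_range_succ _)]
  · simp [oneT_apply]
  · intro i hi hne
    have : w.drop i ≠ [] := by simp at hi ⊢; omega
    simp [oneT_apply, this]

lemma one_mulT (f : T n) : mulT oneT f = f := by
  funext w
  rw [mulT, sum_eq_single_of_mem 0 (by simp)]
  · simp [oneT_apply]
  · intro i hi hne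
    have : w.take i ≠ [] := by
      rw [Ne, List.take_eq_nil_iff]
      rintro (h | rfl)
      · exact hne h
      · simp at hi; exact hne hi
    simp [oneT_apply, this]

lemma mulT_assoc (f g h : T n) : mulT (mulT f g) h = mulT f (mulT g h) := by
  funext w
  have expand_left : ∀ i ∈ range (w.length + 1), mulT f g (w.take i) * h (w.drop i)
      = ∑ j ∈ range (i + 1), f (w.take j) * g ((w.drop j).take (i - j)) * h (w.drop i) := by
    intro i hi
    rw [mem_range, Nat.lt_succ_iff] at hi
    rw [mulT, List.length_take, min_eq_left hi, sum_mul]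
    refine sum_congr rfl fun j hj => ?_
    rw [mem_range, Nat.lt_succ_iff] at hj
    rw [List.take_take, min_eq_left hj, List.drop_take]
  rw [mulT, sum_congr rfl expand_left, sum_range_sum_range_succ_comm]
  refine sum_congr rfl fun j hj => ?_
  rw [mem_range] at hj
  rw [mulT, mul_sum, List.length_drop, show w.length + 1 - j = w.length - j + 1 by omega]
  refine sum_congr rfl fun d _ => ?_
  rw [Nat.add_sub_cancel_left, ← List.drop_drop, mul_assoc]

lemma mulT_add_left (f g h : T n) : mulT (f + g) h = mulT f h + mulT g h := by
  funext w; simp [mulT, add_mul, sum_add_distrib]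

lemma mulT_add_right (f g h : T n) : mulT f (g + h) = mulT f g + mulT f h := by
  funext w; simp [mulT, mul_add, sum_add_distrib]

lemma mulT_neg_left (f g : T n) : mulT (-f) g = -mulT f g := by
  funext w; simp [mulT]

lemma mulT_neg_right (f g : T n) : mulT f (-g) = -mulT f g := by
  funext w; simp [mulT]

lemma mulT_sub_left (f g h : T n) : mulT (f - g) h = mulT f h - mulT g h := by
  rw [sub_eq_add_neg, mulT_add_left, mulT_neg_left, ← sub_eq_add_neg]

lemma mulT_sub_right (f g h : T n) : mulT f (g - h) = mulT f g - mulT f h := by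
  rw [sub_eq_add_neg, mulT_add_right, mulT_neg_right, ← sub_eq_add_neg]

lemma mulT_zero (f : T n) : mulT f 0 = 0 := by funext w; simp [mulT]

lemma zero_mulT (f : T n) : mulT 0 f = 0 := by funext w; simp [mulT]

lemma mulT_sum_left {ι : Type*} (s : Finset ι) (F : ι → T n) (g : T n) :
    mulT (∑ i ∈ s, F i) g = ∑ i ∈ s, mulT (F i) g := by
  funext w
  simp only [mulT, Finset.sum_apply, sum_mul]
  rw [sum_comm]

lemma mulT_sum_right {ι : Type*} (s : Finset ι) (f : T n) (F : ι → T n) :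
    mulT f (∑ i ∈ s, F i) = ∑ i ∈ s, mulT f (F i) := by
  funext w
  simp only [mulT, Finset.sum_apply, mul_sum]
  rw [sum_comm]

lemma mulT_right_cancel_of_mulT_eq_oneT {f f' h h' : T n} (hh : mulT h h' = oneT)
    (hf : mulT f h = mulT f' h) : f = f' := by
  rw [← mulT_one f, ← mulT_one f', ← hh, ← mulT_assoc, ← mulT_assoc, hf]

end Concatenation

section Diamond

variable {n : ℕ}

lemma x0_apply (w : Word n) : x0 n w = if w.length = 1 then -1 else 0 := by
  rw [x0, Pi.neg_apply, Finset.sum_apply]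
  rcases w with _ | ⟨_, _ | ⟨_, _⟩⟩ <;> simp [xgen]

lemma x0_apply_nil : x0 n [] = 0 := by simp [x0_apply]

lemma dia_apply_nil (f g : T n) : dia f g [] = 0 := by simp [dia]

lemma dia_zero_left (g : T n) : dia 0 g = 0 := by
  funext w; simp [dia]

lemma dia_add_left (f g h : T n) : dia (f + g) h = dia f h + dia g h := by
  funext w; simp [dia, add_mul, sum_add_distrib]; ring

lemma dia_neg_left (f g : T n) : dia (-f) g = -dia f g := by
  funext w; simp [dia]

lemma dia_sub_left (f g h : T n) : dia (f - g) h = dia f h - dia g h := by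
  rw [sub_eq_add_neg, dia_add_left, dia_neg_left, ← sub_eq_add_neg]

lemma dia_sum_left {ι : Type*} (s : Finset ι) (F : ι → T n) (g : T n) :
    dia (∑ i ∈ s, F i) g = ∑ i ∈ s, dia (F i) g := by
  funext w
  simp only [dia, Finset.sum_apply, sum_mul, ← sum_neg_distrib]
  rw [sum_comm]

lemma dia_x0_left (f : T n) (hf : f [] = 0) : dia (x0 n) f = f := by
  funext w
  rcases w with _ | ⟨a, u⟩
  · simp [dia, hf]
  rw [dia, sum_eq_single_of_mem 0 (by simp)]
  · simp [x0_apply]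
  · intro i hi hne
    rw [mem_range] at hi
    rw [x0_apply, List.length_take, min_eq_left hi, if_neg (by omega), zero_mul]

lemma dia_x0_right (f : T n) (hf : f [] = 0) : dia f (x0 n) = f := by
  funext w
  rcases w.eq_nil_or_concat' with rfl | ⟨u, a, rfl⟩
  · simp [dia, hf]
  rw [dia, List.length_append, List.length_singleton,
    sum_eq_single_of_mem u.length (self_mem_range_succ _)]
  · simp [x0_apply, List.take_of_length_le]
  · intro i hi hne
    rw [mem_range] at hi
    rw [x0_apply, List.length_drop, List.length_append, List.length_singleton, if_neg (by omega),
      mul_zero]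

lemma dia_assoc (f g h : T n) : dia (dia f g) h = dia f (dia g h) := by
  funext w
  have expand_left : ∀ j ∈ range w.length, dia f g (w.take (j + 1)) * h (w.drop j)
      = -∑ i ∈ range (j + 1),
          f (w.take (i + 1)) * (g ((w.drop i).take (j + 1 - i)) * h (w.drop j)) := by
    intro j hj
    rw [mem_range] at hj
    rw [dia, List.length_take, min_eq_left hj, neg_mul, sum_mul]
    congr 1
    refine sum_congr rfl fun i hi => ?_
    rw [mem_range] at hi
    rw [List.take_take, min_eq_left (by omega), List.drop_take, mul_assoc]
  have expand_right : ∀ i ∈ range w.length, f (w.take (i + 1)) * dia g h (w.drop i)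
      = -∑ d ∈ range (w.length - i),
          f (w.take (i + 1)) * (g ((w.drop i).take (d + 1)) * h (w.drop (i + d))) := by
    intro i _
    rw [dia, List.length_drop, mul_neg, mul_sum]
    simp only [List.drop_drop]
  rw [dia, dia, sum_congr rfl expand_left, sum_congr rfl expand_right]
  simp only [sum_neg_distrib, neg_neg]
  rw [sum_range_sum_range_succ_comm]
  refine sum_congr rfl fun i _ => sum_congr rfl fun d _ => ?_
  rw [show i + d + 1 - i = d + 1 by omega]

lemma dia_mulT_left (f g h : T n) (hg : g [] = 0) :
    dia (mulT f g) h = mulT f (dia g h) := by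
  funext w
  have expand_left : ∀ i ∈ range w.length, mulT f g (w.take (i + 1)) * h (w.drop i)
      = ∑ j ∈ range (i + 1), f (w.take j) * (g ((w.drop j).take (i + 1 - j)) * h (w.drop i)) := by
    intro i hi
    rw [mem_range] at hi
    rw [mulT, List.length_take, min_eq_left hi, sum_mul, sum_range_succ,
      (List.drop_eq_nil_of_le (by simp) : (w.take (i + 1)).drop (i + 1) = []), hg, mul_zero,
      zero_mul, add_zero]
    refine sum_congr rfl fun j hj => ?_
    rw [mem_range] at hj
    rw [List.take_take, min_eq_left (by omega), List.drop_take, mul_assoc]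
  have expand_right : ∀ j ∈ range w.length, f (w.take j) * dia g h (w.drop j)
      = -∑ d ∈ range (w.length - j),
          f (w.take j) * (g ((w.drop j).take (d + 1)) * h (w.drop (j + d))) := by
    intro j _
    rw [dia, List.length_drop, mul_neg, mul_sum]
    simp only [List.drop_drop]
  rw [dia, mulT, sum_range_succ, List.drop_length, dia_apply_nil, mul_zero, add_zero,
    sum_congr rfl expand_left, sum_congr rfl expand_right, sum_range_sum_range_succ_comm,
    sum_neg_distrib]
  refine congrArg _ (sum_congr rfl fun j _ => sum_congr rfl fun d _ => ?_)
  rw [show j + d + 1 - j = d + 1 by omega]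

lemma eq_of_dia_eq_x0 {a v w : T n} (hv : v [] = 0) (hw : w [] = 0)
    (hav : dia a v = x0 n) (hwa : dia w a = x0 n) : v = w := by
  rw [← dia_x0_left v hv, ← hwa, dia_assoc, hav, dia_x0_right w hw]

end Diamond

def lderiv {n : ℕ} (k : Fin n) (f : T n) : T n := fun w => f (k :: w)

section LeftDerivative

variable {n : ℕ}

lemma xgen_apply_of_length_ne_one (k : Fin n) {w : Word n} (hw : w.length ≠ 1) :
    xgen k w = 0 :=
  if_neg fun h => hw (by simp [h])

lemma mulT_xgen_apply_cons (k : Fin n) (g : T n) (a : Fin n) (t : Word n) :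
    mulT (xgen k) g (a :: t) = if a = k then g t else 0 := by
  rw [mulT, sum_eq_single_of_mem 1 (by simp)]
  · by_cases h : a = k <;> simp [xgen, h]
  · intro i hi hne
    rw [mem_range, List.length_cons] at hi
    rw [xgen_apply_of_length_ne_one k (by simp; omega), zero_mul]

lemma dia_xgen_left (k : Fin n) (f : T n) :
    dia (xgen k) f = -mulT (xgen k) (lderiv k f) := by
  funext w
  rcases w with _ | ⟨a, t⟩
  · simp [dia, mulT, xgen]
  rw [dia, Pi.neg_apply, mulT_xgen_apply_cons, sum_eq_single_of_mem 0 (by simp)]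
  · by_cases h : a = k
    · subst h; simp [xgen, lderiv]
    · simp [xgen, h]
  · intro i hi hne
    rw [mem_range, List.length_cons] at hi
    rw [xgen_apply_of_length_ne_one k (by rw [List.length_take, List.length_cons]; omega),
      zero_mul]

lemma lderiv_oneT (k : Fin n) : lderiv k (oneT : T n) = 0 := by
  funext w
  simp [lderiv, oneT_apply]

lemma lderiv_mulT (k : Fin n) (f g : T n) :
    lderiv k (mulT f g) = f [] • lderiv k g + mulT (lderiv k f) g := by
  funext w
  rw [lderiv, mulT, List.length_cons, sum_range_succ']
  simp only [List.take_zero, List.drop_zero, List.take_succ_cons, List.drop_succ_cons]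
  rw [add_comm]
  rfl

end LeftDerivative

section Substitution

variable {n : ℕ}

lemma powT_add (a : T n) (i j : ℕ) : powT a (i + j) = mulT (powT a i) (powT a j) := by
  induction i with
  | zero => rw [Nat.zero_add, powT, one_mulT]
  | succ i ih => rw [Nat.add_right_comm, powT, powT, ih, mulT_assoc]

lemma powT_two (a : T n) : powT a 2 = mulT a a := by
  rw [powT, powT, powT, mulT_one]

lemma powT_apply_of_length_lt {a : T n} (ha : a [] = 0) {m : ℕ} {w : Word n}
    (hw : w.length < m) : powT a m w = 0 := by
  induction m generalizing w with
  | zero => omega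
  | succ m ih =>
    rw [powT, mulT]
    refine sum_eq_zero fun i hi => ?_
    rw [mem_range] at hi
    rcases i with _ | i
    · rw [List.take_zero, ha, zero_mul]
    · rw [ih (by rw [List.length_drop]; omega), mul_zero]

lemma substT_apply_nil (F : PowerSeries ℚ) (a : T n) : substT F a [] = coeff 0 F := by
  simp [substT, powT, oneT]

lemma substT_apply_eq_sum {a : T n} (ha : a [] = 0) (F : PowerSeries ℚ) {w : Word n} {N : ℕ}
    (hN : w.length ≤ N) :
    substT F a w = ∑ m ∈ range (N + 1), coeff m F * powT a m w := by
  refine sum_subset (range_subset_range.mpr (by omega)) fun m _ hm => ?_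
  rw [mem_range] at hm
  rw [powT_apply_of_length_lt ha (w := w) (by omega), mul_zero]

lemma substT_add (F G : PowerSeries ℚ) (a : T n) :
    substT (F + G) a = substT F a + substT G a := by
  funext w; simp [substT, add_mul, sum_add_distrib]

lemma substT_neg (F : PowerSeries ℚ) (a : T n) : substT (-F) a = -substT F a := by
  funext w; simp [substT]

lemma substT_sub (F G : PowerSeries ℚ) (a : T n) :
    substT (F - G) a = substT F a - substT G a := by
  rw [sub_eq_add_neg, substT_add, substT_neg, ← sub_eq_add_neg]

lemma substT_one (a : T n) : substT 1 a = oneT := by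
  funext w
  rw [substT, sum_eq_single_of_mem 0 (by simp)]
  · simp [powT]
  · intro m _ hm
    rw [coeff_one, if_neg hm, zero_mul]

lemma substT_X {a : T n} (ha : a [] = 0) : substT X a = a := by
  funext w
  rcases w with _ | ⟨b, w⟩
  · rw [substT_apply_nil, coeff_zero_X, ha]
  rw [substT, sum_eq_single_of_mem 1 (by simp)]
  · rw [coeff_one_X, one_mul, powT, powT, mulT_one]
  · intro m _ hm
    rw [coeff_X, if_neg hm, zero_mul]

lemma substT_mul {a : T n} (ha : a [] = 0) (F G : PowerSeries ℚ) :
    substT (F * G) a = mulT (substT F a) (substT G a) := by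
  funext w
  set N := w.length
  have lhs : substT (F * G) a w
      = ∑ m ∈ range (N + 1), ∑ p ∈ range (m + 1),
          coeff p F * coeff (m - p) G * powT a m w := by
    refine sum_congr rfl fun m _ => ?_
    rw [coeff_mul, Nat.sum_antidiagonal_eq_sum_range_succ (fun p q => coeff p F * coeff q G),
      sum_mul]
  have rhs : mulT (substT F a) (substT G a) w
      = ∑ p ∈ range (N + 1), ∑ q ∈ range (N + 1), coeff p F * coeff q G * powT a (p + q) w := by
    have split : ∀ j ∈ range (N + 1), substT F a (w.take j) * substT G a (w.drop j)
        = ∑ p ∈ range (N + 1), ∑ q ∈ range (N + 1),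
            coeff p F * coeff q G * (powT a p (w.take j) * powT a q (w.drop j)) := by
      intro j _
      rw [substT_apply_eq_sum ha F (N := N) (by simp [N]),
        substT_apply_eq_sum ha G (N := N) (by simp [N]), sum_mul_sum]
      exact sum_congr rfl fun p _ => sum_congr rfl fun q _ => by ring
    rw [mulT, sum_congr rfl split, sum_comm]
    refine sum_congr rfl fun p _ => ?_
    rw [sum_comm]
    exact sum_congr rfl fun q _ => by rw [← mul_sum, powT_add, mulT]
  rw [lhs, rhs, sum_range_sum_range_succ_comm]
  refine sum_congr rfl fun p hp => ?_
  rw [mem_range] at hp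
  symm
  refine (sum_subset (range_subset_range.mpr (by omega)) fun q _ hq => ?_).symm.trans
    (sum_congr rfl fun d _ => by rw [Nat.add_sub_cancel_left])
  rw [mem_range] at hq
  rw [powT_apply_of_length_lt ha (by omega), mul_zero]

lemma mulT_self_substT {a : T n} (ha : a [] = 0) (F : PowerSeries ℚ) :
    mulT a (substT F a) = substT (X * F) a := by
  rw [substT_mul ha, substT_X ha]

lemma mulT_substT_self {a : T n} (ha : a [] = 0) (F : PowerSeries ℚ) :
    mulT (substT F a) a = substT (F * X) a := by
  rw [substT_mul ha, substT_X ha]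

lemma powT_substT {a : T n} (ha : a [] = 0) (G : PowerSeries ℚ) (m : ℕ) :
    powT (substT G a) m = substT (G ^ m) a := by
  induction m with
  | zero => rw [pow_zero, substT_one]; rfl
  | succ m ih => rw [powT, ih, ← substT_mul ha, ← pow_succ']

lemma coeff_pow_eq_zero_of_lt {R : Type*} [CommRing R] {G : PowerSeries R}
    (hG : constantCoeff G = 0) {j m : ℕ} (h : j < m) : coeff j (G ^ m) = 0 :=
  X_pow_dvd_iff.mp (pow_dvd_pow_of_dvd (X_dvd_iff.mpr hG) m) j h

lemma coeff_subst_eq_sum {R : Type*} [CommRing R] (F : PowerSeries R) {G : PowerSeries R}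
    (hG : constantCoeff G = 0) (j : ℕ) :
    coeff j (F.subst G) = ∑ m ∈ range (j + 1), coeff m F * coeff j (G ^ m) := by
  rw [coeff_subst' (HasSubst.of_constantCoeff_zero' hG)]
  refine finsum_eq_sum_of_support_subset _ fun m hm => ?_
  by_contra hj
  simp only [coe_range, Set.mem_Iio, not_lt] at hj
  exact hm (by simp only [coeff_pow_eq_zero_of_lt hG (by omega : j < m), smul_zero])

lemma substT_subst {a : T n} (ha : a [] = 0) (F : PowerSeries ℚ) {G : PowerSeries ℚ}
    (hG : constantCoeff G = 0) :
    substT (F.subst G) a = substT F (substT G a) := by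
  funext w
  have expand : ∀ m ∈ range (w.length + 1), coeff m F * powT (substT G a) m w
      = ∑ j ∈ range (w.length + 1), coeff m F * coeff j (G ^ m) * powT a j w := by
    intro m _
    rw [powT_substT ha, substT, mul_sum]
    exact sum_congr rfl fun j _ => by ring
  rw [substT, substT, sum_congr rfl expand, sum_comm]
  refine sum_congr rfl fun j hj => ?_
  rw [mem_range] at hj
  rw [coeff_subst_eq_sum F hG, sum_mul]
  refine sum_subset (range_subset_range.mpr (by omega)) fun m _ hm => ?_
  rw [mem_range] at hm
  rw [coeff_pow_eq_zero_of_lt hG (by omega), mul_zero, zero_mul]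

end Substitution

section Series

lemma logSeries_eq_log : logSeries = log ℚ := by
  ext m
  simp [logSeries, coeff_log]

lemma one_add_X_mul_derivative_log : (1 + X) * d⁄dX ℚ (log ℚ) = 1 := by
  ext m
  rcases m with _ | m <;> simp [deriv_log, add_mul, coeff_succ_X_mul, pow_succ]

/-- `Y = exp (log (1 + X))` satisfies `Y' = Y / (1 + X)`, so `Y / (1 + X)` is constant. -/
lemma exp_subst_log : (exp ℚ).subst (log ℚ) = 1 + X := by
  set Y := (exp ℚ).subst (log ℚ)
  have hunit : constantCoeff (1 + X : PowerSeries ℚ) ≠ 0 := by simp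
  have hlog : d⁄dX ℚ (log ℚ) = (1 + X)⁻¹ :=
    (PowerSeries.eq_inv_iff_mul_eq_one hunit).mpr (by rw [mul_comm, one_add_X_mul_derivative_log])
  have hY : d⁄dX ℚ Y = Y * (1 + X)⁻¹ := by
    rw [derivative_subst HasSubst.log, derivative_exp, hlog]
  have hY0 : constantCoeff Y = 1 := by
    rw [← coeff_zero_eq_constantCoeff_apply, coeff_subst_eq_sum _ constantCoeff_log]
    simp
  have hquot : Y * (1 + X)⁻¹ = 1 := by
    refine derivative.ext ?_ (by simp [hY0])
    rw [Derivation.leibniz, derivative_inv', hY]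
    simp only [smul_eq_mul, map_add, derivative_one, derivative_X, derivative_one]
    ring
  calc Y = Y * (1 + X)⁻¹ * (1 + X) := by
        rw [mul_assoc, PowerSeries.inv_mul_cancel _ hunit, mul_one]
    _ = 1 + X := by rw [hquot, one_mul]


noncomputable def expSubOneDivX : PowerSeries ℚ := mk fun p => coeff (p + 1) (exp ℚ)

lemma X_mul_expSubOneDivX : X * expSubOneDivX = exp ℚ - 1 := by
  rw [expSubOneDivX, ← sub_const_eq_X_mul_shift, constantCoeff_exp, map_one]

lemma constantCoeff_expSubOneDivX : constantCoeff expSubOneDivX = 1 := by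
  simp [expSubOneDivX, ← coeff_zero_eq_constantCoeff_apply, coeff_exp]

lemma exp_neg_sub_one_ne_zero : rescale (-1) (exp ℚ) - 1 ≠ 0 := fun h => by
  simpa [coeff_exp] using congrArg (coeff 1) h

lemma sSpec.mul_X {s g : PowerSeries ℚ} (hs : sSpec s) (hg : gSpec g) : s * X = g + 1 := by
  refine mul_right_cancel₀ exp_neg_sub_one_ne_zero ?_
  rw [add_mul, one_mul, hg, mul_assoc, hs]

lemma gSpec.mul_expSubOneDivX {g : PowerSeries ℚ} (hg : gSpec g) :
    g * expSubOneDivX = -exp ℚ := by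
  refine mul_left_cancel₀ (X_ne_zero (R := ℚ)) ?_
  have hexp : exp ℚ - 1 = -((rescale (-1) (exp ℚ) - 1) * exp ℚ) := by
    rw [sub_mul, one_mul, mul_comm, ← evalNegHom, exp_mul_exp_neg_eq_one]
    ring
  rw [mul_left_comm, X_mul_expSubOneDivX, hexp, mul_neg, ← mul_assoc, hg, mul_neg]

lemma sSpec.mul_X_mul_expSubOneDivX {s g : PowerSeries ℚ} (hs : sSpec s) (hg : gSpec g) :
    s * X * expSubOneDivX = expSubOneDivX - exp ℚ := by
  rw [hs.mul_X hg, add_mul, hg.mul_expSubOneDivX, one_mul]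
  ring

lemma sSpec.mul_X_mul_exp_sub_one {s g : PowerSeries ℚ} (hs : sSpec s) (hg : gSpec g) :
    s * X * (exp ℚ - 1) = exp ℚ - X * exp ℚ - 1 := by
  rw [← X_mul_expSubOneDivX, mul_left_comm, hs.mul_X_mul_expSubOneDivX hg, mul_sub,
    X_mul_expSubOneDivX]
  ring

end Series

section SubstitutionIdentities

variable {n : ℕ}

lemma expT_logT {f : T n} (hf : f [] = 1) : expT (logT f) = f := by
  have h1 : (f - oneT : T n) [] = 0 := by simp [hf, oneT_apply]
  rw [expT, logT, logSeries_eq_log, ← substT_subst h1 _ constantCoeff_log, exp_subst_log,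
    substT_add, substT_one, substT_X h1, add_sub_cancel]

lemma expT_apply_nil (a : T n) : expT a [] = 1 := by
  simp [expT, substT_apply_nil, coeff_exp]

lemma mulT_substT_inv {a : T n} (ha : a [] = 0) {F : PowerSeries ℚ}
    (hF : constantCoeff F ≠ 0) : mulT (substT F a) (substT F⁻¹ a) = oneT := by
  rw [← substT_mul ha, PowerSeries.mul_inv_cancel _ hF, substT_one]

lemma lderiv_xgen (k l : Fin n) : lderiv k (xgen l) = if k = l then oneT else 0 := by
  funext w
  by_cases h : k = l <;> simp [lderiv, xgen, oneT_apply, h]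

lemma lderiv_powT_succ (k : Fin n) {a : T n} (ha : a [] = 0) (m : ℕ) :
    lderiv k (powT a (m + 1)) = mulT (lderiv k a) (powT a m) := by
  rw [powT, lderiv_mulT, ha, zero_smul, zero_add]

/-- Chain rule; `mk fun p => coeff (p + 1) F` is `(F - F(0))/z`. -/
lemma lderiv_substT (k : Fin n) {a : T n} (ha : a [] = 0) (F : PowerSeries ℚ) :
    lderiv k (substT F a) = mulT (lderiv k a) (substT (mk fun p => coeff (p + 1) F) a) := by
  funext w
  have expand : ∀ m ∈ range (w.length + 1), coeff (m + 1) F * powT a (m + 1) (k :: w)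
      = ∑ i ∈ range (w.length + 1),
          lderiv k a (w.take i) * (coeff (m + 1) F * powT a m (w.drop i)) := by
    intro m _
    rw [show powT a (m + 1) (k :: w) = lderiv k (powT a (m + 1)) w from rfl,
      lderiv_powT_succ k ha, mulT, mul_sum]
    exact sum_congr rfl fun i _ => by ring
  rw [lderiv, substT, List.length_cons, sum_range_succ', powT, oneT_apply, if_neg (by simp),
    mul_zero, add_zero, sum_congr rfl expand, sum_comm, mulT]
  refine sum_congr rfl fun i hi => ?_
  rw [mem_range] at hi
  rw [substT_apply_eq_sum ha _ (N := w.length) (by simp), mul_sum]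
  simp only [coeff_mk]

lemma lderiv_substT_xgen (k l : Fin n) (F : PowerSeries ℚ) :
    lderiv k (substT F (xgen l))
      = if k = l then substT (mk fun p => coeff (p + 1) F) (xgen k) else 0 := by
  rw [lderiv_substT k (xgen_apply_nil l), lderiv_xgen]
  split_ifs with h
  · rw [one_mulT, h]
  · exact zero_mulT _

end SubstitutionIdentities

/-- `P j = e^{x_j} ⋯ e^{x_{n-1}}`, with the generators indexed from `0`; `Ξ = log (P 0)`. -/
noncomputable def suffixExpProd (n j : ℕ) : T n :=
  prodT (((List.finRange n).drop j).map fun k => expT (xgen k))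

section SuffixProducts

variable {n : ℕ}

lemma prodT_apply_nil (l : List (T n)) : prodT l [] = (l.map fun f => f []).prod := by
  induction l with
  | nil => simp [prodT, oneT_apply]
  | cons f l ih => rw [prodT, mulT_apply_nil, ih, List.map_cons, List.prod_cons]

lemma suffixExpProd_apply_nil (j : ℕ) : suffixExpProd n j [] = 1 := by
  rw [suffixExpProd, prodT_apply_nil, List.map_map]
  exact List.prod_eq_one fun x hx => by
    obtain ⟨k, -, rfl⟩ := List.mem_map.mp hx
    exact expT_apply_nil _

lemma suffixExpProd_of_le {j : ℕ} (hj : n ≤ j) : suffixExpProd n j = oneT := by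
  rw [suffixExpProd, List.drop_eq_nil_of_le (by simpa using hj)]
  rfl

lemma suffixExpProd_of_lt {j : ℕ} (hj : j < n) :
    suffixExpProd n j = mulT (expT (xgen ⟨j, hj⟩)) (suffixExpProd n (j + 1)) := by
  rw [suffixExpProd, List.drop_eq_getElem_cons (by simpa using hj), List.map_cons,
    List.getElem_finRange]
  rfl

lemma suffixExpProd_fin (k : Fin n) :
    suffixExpProd n k = mulT (expT (xgen k)) (suffixExpProd n (k + 1)) :=
  suffixExpProd_of_lt k.isLt

lemma lderiv_suffixExpProd (k : Fin n) (j : ℕ) :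
    lderiv k (suffixExpProd n j)
      = if j ≤ k then mulT (substT expSubOneDivX (xgen k)) (suffixExpProd n (k + 1)) else 0 := by
  induction hd : n - j generalizing j with
  | zero =>
    rw [suffixExpProd_of_le (by omega), lderiv_oneT, if_neg (by omega)]
  | succ d ih =>
    rw [suffixExpProd_of_lt (by omega), lderiv_mulT, expT_apply_nil, one_smul, expT,
      lderiv_substT_xgen, ih (j + 1) (by omega)]
    rcases lt_trichotomy j k with hjk | rfl | hjk
    · rw [if_neg (Fin.ne_of_val_ne (by simp; omega)), zero_mulT, add_zero,
        if_pos (by omega), if_pos hjk.le]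
    · simp [expSubOneDivX]
    · rw [if_neg (Fin.ne_of_val_ne (by simp; omega)), zero_mulT, add_zero,
        if_neg (by omega), if_neg (by omega)]

lemma sum_suffixExpProd_sub (n : ℕ) :
    ∑ k : Fin n, (suffixExpProd n k - suffixExpProd n (k + 1)) = suffixExpProd n 0 - oneT := by
  rw [Fin.sum_univ_eq_sum_range (fun i => suffixExpProd n i - suffixExpProd n (i + 1)),
    sum_range_sub', suffixExpProd_of_le le_rfl]

lemma sum_lt_suffixExpProd_sub (k : Fin n) :
    ∑ l : Fin n, (if l < k then suffixExpProd n l - suffixExpProd n (l + 1) else 0)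
      = suffixExpProd n 0 - suffixExpProd n k := by
  simp only [Fin.lt_def]
  rw [Fin.sum_univ_eq_sum_range
      (fun i => if i < (k : ℕ) then suffixExpProd n i - suffixExpProd n (i + 1) else 0),
    ← sum_subset (range_subset_range.mpr k.isLt.le) fun i _ hi => if_neg (by simpa using hi),
    sum_congr rfl fun i hi => if_pos (mem_range.mp hi), sum_range_sub']

end SuffixProducts

section BCH

variable {n : ℕ}

lemma Xi_eq_logT : Xi n = logT (suffixExpProd n 0) := by
  rw [suffixExpProd, List.drop_zero]
  rfl

lemma Xi_apply_nil : Xi n [] = 0 := by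
  rw [Xi, logT, substT_apply_nil, logSeries_eq_log, coeff_zero_eq_constantCoeff_apply,
    constantCoeff_log]

lemma expT_Xi : expT (Xi n) = suffixExpProd n 0 := by
  rw [Xi_eq_logT, expT_logT (suffixExpProd_apply_nil 0)]

lemma mulT_substT_expSubOneDivX {a : T n} (ha : a [] = 0) :
    mulT a (substT expSubOneDivX a) = expT a - oneT := by
  rw [mulT_self_substT ha, X_mul_expSubOneDivX, substT_sub, substT_one, expT]

lemma mulT_Xi_substT_expSubOneDivX :
    mulT (Xi n) (substT expSubOneDivX (Xi n)) = suffixExpProd n 0 - oneT := by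
  rw [mulT_substT_expSubOneDivX Xi_apply_nil, expT_Xi]

lemma mulT_lderiv_Xi_substT_expSubOneDivX (k : Fin n) :
    mulT (lderiv k (Xi n)) (substT expSubOneDivX (Xi n))
      = mulT (substT expSubOneDivX (xgen k)) (suffixExpProd n (k + 1)) := by
  have h := lderiv_substT k (Xi_apply_nil (n := n)) (exp ℚ)
  rw [← expT, expT_Xi, lderiv_suffixExpProd, if_pos (Nat.zero_le _)] at h
  exact h.symm

lemma mulT_dia_xgen_neg_Xi (l : Fin n) :
    mulT (dia (xgen l) (-Xi n)) (substT expSubOneDivX (Xi n))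
      = suffixExpProd n l - suffixExpProd n (l + 1) := by
  rw [dia_xgen_left, show lderiv l (-Xi n) = -lderiv l (Xi n) from rfl, mulT_neg_right, neg_neg,
    mulT_assoc, mulT_lderiv_Xi_substT_expSubOneDivX, ← mulT_assoc,
    mulT_substT_expSubOneDivX (xgen_apply_nil l), mulT_sub_left, one_mulT, ← suffixExpProd_fin]

end BCH

def lowerProdSum (n : ℕ) : T n :=
  ∑ k : Fin n, ∑ l : Fin n, if l < k then mulT (xgen k) (xgen l) else 0

noncomputable def sSquareSum (s : PowerSeries ℚ) (n : ℕ) : T n :=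
  ∑ k : Fin n, mulT (substT s (xgen k)) (powT (xgen k) 2)

noncomputable def diaInvFormula (s : PowerSeries ℚ) (n : ℕ) : T n :=
  x0 n - lowerProdSum n + sSquareSum s n - mulT (x0 n) (mulT (substT s (Xi n)) (x0 n))

section MainComputation

variable {n : ℕ}

lemma mulT_dia_x0_neg_Xi :
    mulT (dia (x0 n) (-Xi n)) (substT expSubOneDivX (Xi n)) = oneT - suffixExpProd n 0 := by
  rw [dia_x0_left _ (by simp [Xi_apply_nil]), mulT_neg_left, mulT_Xi_substT_expSubOneDivX,
    neg_sub]

lemma mulT_dia_lowerProdSum_neg_Xi :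
    mulT (dia (lowerProdSum n) (-Xi n)) (substT expSubOneDivX (Xi n))
      = ∑ k : Fin n, (mulT (xgen k) (suffixExpProd n 0) - mulT (xgen k) (suffixExpProd n k)) := by
  rw [lowerProdSum, dia_sum_left, mulT_sum_left]
  refine sum_congr rfl fun k _ => ?_
  rw [← mulT_sub_right, ← sum_lt_suffixExpProd_sub, dia_sum_left, mulT_sum_left, mulT_sum_right]
  refine sum_congr rfl fun l _ => ?_
  split_ifs
  · rw [dia_mulT_left _ _ _ (xgen_apply_nil l), mulT_assoc, mulT_dia_xgen_neg_Xi]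
  · rw [dia_zero_left, zero_mulT, mulT_zero]

lemma mulT_dia_sSquareSum_neg_Xi {s g : PowerSeries ℚ} (hs : sSpec s) (hg : gSpec g) :
    mulT (dia (sSquareSum s n) (-Xi n)) (substT expSubOneDivX (Xi n))
      = suffixExpProd n 0 - oneT - ∑ k : Fin n, mulT (xgen k) (suffixExpProd n k) := by
  rw [← sum_suffixExpProd_sub, ← sum_sub_distrib, sSquareSum, dia_sum_left, mulT_sum_left]
  refine sum_congr rfl fun k _ => ?_
  have hx := xgen_apply_nil k
  have hsx : substT (s * X * (exp ℚ - 1)) (xgen k)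
      = mulT (mulT (substT s (xgen k)) (xgen k)) (expT (xgen k) - oneT) := by
    rw [substT_mul hx, substT_mul hx, substT_X hx, substT_sub, substT_one, expT]
  have hdiff : suffixExpProd n k - suffixExpProd n (k + 1)
      = mulT (expT (xgen k) - oneT) (suffixExpProd n (k + 1)) := by
    rw [mulT_sub_left, one_mulT, ← suffixExpProd_fin]
  rw [powT_two, ← mulT_assoc, dia_mulT_left _ _ _ hx, mulT_assoc, mulT_dia_xgen_neg_Xi, hdiff,
    ← mulT_assoc, ← hsx, hs.mul_X_mul_exp_sub_one hg, substT_sub, substT_sub, substT_mul hx,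
    substT_X hx, substT_one, ← expT, mulT_sub_left, mulT_sub_left, one_mulT, mulT_assoc,
    ← suffixExpProd_fin, ← hdiff, sub_right_comm]

lemma mulT_dia_x0_substT_x0_neg_Xi {s g : PowerSeries ℚ} (hs : sSpec s) (hg : gSpec g) :
    mulT (dia (mulT (x0 n) (mulT (substT s (Xi n)) (x0 n))) (-Xi n))
        (substT expSubOneDivX (Xi n))
      = -∑ k : Fin n, mulT (xgen k) (suffixExpProd n 0)
          - mulT (x0 n) (substT expSubOneDivX (Xi n)) := by
  have hXi := Xi_apply_nil (n := n)
  have hsXi : mulT (substT s (Xi n)) (mulT (Xi n) (substT expSubOneDivX (Xi n)))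
      = substT expSubOneDivX (Xi n) - suffixExpProd n 0 := by
    rw [← mulT_assoc, mulT_substT_self hXi, ← substT_mul hXi, hs.mul_X_mul_expSubOneDivX hg,
      substT_sub, ← expT, expT_Xi]
  have hx0P :
      mulT (x0 n) (suffixExpProd n 0) = -∑ k : Fin n, mulT (xgen k) (suffixExpProd n 0) := by
    rw [x0, mulT_neg_left, mulT_sum_left]
  rw [dia_mulT_left _ _ _ (by rw [mulT_apply_nil, x0_apply_nil, mul_zero]),
    dia_mulT_left _ _ _ x0_apply_nil, dia_x0_left _ (by simp [hXi]), mulT_neg_right,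
    mulT_neg_right, mulT_neg_left, mulT_assoc, mulT_assoc, hsXi, mulT_sub_right, hx0P]
  abel

lemma diaInvFormula_apply_nil (s : PowerSeries ℚ) : diaInvFormula s n [] = 0 := by
  simp [diaInvFormula, lowerProdSum, sSquareSum, ite_apply, mulT_apply_nil, xgen_apply_nil,
    x0_apply_nil, powT_two]

lemma dia_diaInvFormula_neg_Xi {s g : PowerSeries ℚ} (hs : sSpec s) (hg : gSpec g) :
    dia (diaInvFormula s n) (-Xi n) = x0 n := by
  refine mulT_right_cancel_of_mulT_eq_oneT
    (mulT_substT_inv Xi_apply_nil (by rw [constantCoeff_expSubOneDivX]; exact one_ne_zero)) ?_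
  rw [diaInvFormula, dia_sub_left, dia_add_left, dia_sub_left, mulT_sub_left, mulT_add_left,
    mulT_sub_left, mulT_dia_x0_neg_Xi, mulT_dia_lowerProdSum_neg_Xi,
    mulT_dia_sSquareSum_neg_Xi hs hg, mulT_dia_x0_substT_x0_neg_Xi hs hg, sum_sub_distrib]
  abel

lemma x0_add_sSquareSum {s g : PowerSeries ℚ} (hs : sSpec s) (hg : gSpec g) :
    x0 n + sSquareSum s n = ∑ k : Fin n, mulT (xgen k) (substT g (xgen k)) := by
  rw [x0, sSquareSum, neg_add_eq_sub, ← sum_sub_distrib]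
  refine sum_congr rfl fun k _ => ?_
  have hx := xgen_apply_nil k
  rw [powT_two, ← mulT_assoc, mulT_substT_self hx, mulT_substT_self hx, hs.mul_X hg, add_mul,
    one_mul, mul_comm g X, substT_add, ← mulT_self_substT hx, substT_X hx, add_sub_cancel_right]

end MainComputation

theorem statement11_general (n : ℕ) (s g : PowerSeries ℚ) (hs : sSpec s) (hg : gSpec g)
    (V : T n) (hV : degGE 2 (V - x0 n))
    (hV1 : dia (-(Xi n)) V = x0 n) :
    V + mulT (x0 n) (mulT (substT s (Xi n)) (x0 n)) =
      x0 n - (∑ k : Fin n, ∑ l : Fin n, if l < k then mulT (xgen k) (xgen l) else 0)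
        + ∑ k : Fin n, mulT (substT s (xgen k)) (powT (xgen k) 2) ∧
    x0 n - (∑ k : Fin n, ∑ l : Fin n, if l < k then mulT (xgen k) (xgen l) else 0)
        + (∑ k : Fin n, mulT (substT s (xgen k)) (powT (xgen k) 2)) =
      -(∑ k : Fin n, ∑ l : Fin n, if l < k then mulT (xgen k) (xgen l) else 0)
        + ∑ k : Fin n, mulT (xgen k) (substT g (xgen k)) := by
  have hV0 : V [] = 0 := by simpa [x0_apply_nil] using hV [] (by simp)
  have hVW := eq_of_dia_eq_x0 hV0 (diaInvFormula_apply_nil s) hV1 (dia_diaInvFormula_neg_Xi hs hg)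
  have hsum := x0_add_sSquareSum (n := n) hs hg
  simp only [diaInvFormula, lowerProdSum, sSquareSum] at hVW hsum
  constructor
  · rw [hVW, sub_add_cancel]
  · rw [← hsum]
    abel

/-- Main computation (Theorem 3 of the paper): with `V = (-Ξ)⁻¹` the `⋄`-inverse of `-Ξ`,
`V + x₀ s(Ξ) x₀ = x₀ - ∑_{k>l} xₖxₗ + ∑ₖ s(xₖ)xₖ² = -∑_{k>l} xₖxₗ + ∑ₖ xₖ²/(e^{-xₖ}-1)`. -/
theorem statement11 (n : ℕ) (s g : PowerSeries ℚ) (hs : sSpec s) (hg : gSpec g)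
    (V : T n) (hV : degGE 2 (V - x0 n))
    (hV1 : dia (-(Xi n)) V = x0 n) (hV2 : dia V (-(Xi n)) = x0 n) :
    V + mulT (x0 n) (mulT (substT s (Xi n)) (x0 n)) =
      x0 n - (∑ k : Fin n, ∑ l : Fin n, if l < k then mulT (xgen k) (xgen l) else 0)
        + ∑ k : Fin n, mulT (substT s (xgen k)) (powT (xgen k) 2) ∧
    x0 n - (∑ k : Fin n, ∑ l : Fin n, if l < k then mulT (xgen k) (xgen l) else 0)
        + (∑ k : Fin n, mulT (substT s (xgen k)) (powT (xgen k) 2)) =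
      -(∑ k : Fin n, ∑ l : Fin n, if l < k then mulT (xgen k) (xgen l) else 0)
        + ∑ k : Fin n, mulT (xgen k) (substT g (xgen k)) :=
  statement11_general n s g hs hg V hV hV1
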